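/- Let N be a 3-prime zero-symmetric left near-ring and d a nonzero multiplicative derivation of N such that [d(x), y] = [d(x), d(y)] for all x, y ∈ N, where [a,b] = ab − ba. Then N is a commutative ring (multiplication commutative and addition abelian). -/

import Mathlib

/-!
Expanding the hypothesis at `(x, d x * y)` gives `d (d x) * y * [n, d x] = 0` for all `y, n`, so by
3-primeness either `d (d x) = 0` or `d x` is central; in both cases `[d x, d y] = 0`, and the
hypothesis then says that every `d x` is central. Centrality turns the Leibniz rule into
`d y * (x * y) = d y * (y * x)`, and a nonzero element `c` with `c * (X * y) = c * (y * X)` for all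
`X` forces `y` to be central by 3-primeness (when `d y = 0`, take `c = d w ≠ 0`, using
`d (y * w) = y * d w`). Once multiplication commutes, `N` is also right distributive; expanding
`(a + b) * (u + v)` in two ways shows that additive commutators annihilate `N`, so they vanish.
-/

class LeftNearRing (N : Type*) extends AddGroup N, Mul N where
  mul_assoc : ∀ a b c : N, a * b * c = a * (b * c)
  left_distrib : ∀ a b c : N, a * (b + c) = a * b + a * c

namespace LeftNearRing

variable {N : Type*} [LeftNearRing N]

def IsThreePrime (N : Type*) [LeftNearRing N] : Prop :=
  ∀ a b : N, (∀ n : N, a * n * b = 0) → a = 0 ∨ b = 0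

def IsMulDerivation (d : N → N) : Prop :=
  ∀ x y : N, d (x * y) = x * d y + d x * y

protected theorem mul_zero (x : N) : x * 0 = 0 :=
  (left_eq_add (a := x * 0)).mp (by rw [← LeftNearRing.left_distrib, add_zero])

protected theorem mul_neg (x y : N) : x * -y = -(x * y) :=
  eq_neg_of_add_eq_zero_left (by
    rw [← LeftNearRing.left_distrib, neg_add_cancel, LeftNearRing.mul_zero])

protected theorem mul_sub (x y z : N) : x * (y - z) = x * y - x * z := by
  rw [sub_eq_add_neg, LeftNearRing.left_distrib, LeftNearRing.mul_neg, ← sub_eq_add_neg]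

namespace IsThreePrime

theorem commute_of_mul_mul_comm (hp : IsThreePrime N) {c y : N} (hc : c ≠ 0)
    (h : ∀ X : N, c * (X * y) = c * (y * X)) (x : N) : x * y = y * x := by
  have hxy : ∀ n : N, c * n * (x * y - y * x) = 0 := by
    intro n
    have e₁ : c * (n * (x * y)) = c * (y * (n * x)) := by
      rw [← LeftNearRing.mul_assoc n x y, h]
    have e₂ : c * (n * (y * x)) = c * (y * (n * x)) := by
      rw [← LeftNearRing.mul_assoc n y x, ← LeftNearRing.mul_assoc c (n * y), h,
        LeftNearRing.mul_assoc c (y * n), LeftNearRing.mul_assoc y n x]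
    rw [LeftNearRing.mul_assoc, LeftNearRing.mul_sub, LeftNearRing.mul_sub, e₁, e₂, sub_self]
  exact sub_eq_zero.mp ((hp c _ hxy).resolve_left hc)

theorem add_comm_of_mul_comm (hp : IsThreePrime N) (hmul : ∀ x y : N, x * y = y * x)
    (x y : N) : x + y = y + x := by
  have add_mul (a b c : N) : (a + b) * c = a * c + b * c := by
    rw [hmul (a + b), LeftNearRing.left_distrib, hmul c a, hmul c b]
  have neg_mul (a c : N) : -a * c = -(a * c) := by
    rw [hmul (-a), LeftNearRing.mul_neg, hmul c a]
  have sub_mul (a b c : N) : (a - b) * c = a * c - b * c := by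
    rw [sub_eq_add_neg, add_mul, neg_mul, ← sub_eq_add_neg]
  -- expand `(a + b) * (u + u)` in the two possible orders
  have add_comm_mul (a b u : N) : a * u + b * u = b * u + a * u := by
    have h : a * u + a * u + (b * u + b * u) = a * u + b * u + (a * u + b * u) :=
      calc a * u + a * u + (b * u + b * u) = (a + b) * (u + u) := by
            rw [add_mul, LeftNearRing.left_distrib, LeftNearRing.left_distrib]
        _ = a * u + b * u + (a * u + b * u) := by
            rw [LeftNearRing.left_distrib, add_mul]
    rw [add_assoc (a * u) (a * u), add_assoc (a * u) (b * u)] at h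
    replace h := add_left_cancel h
    rw [← add_assoc, ← add_assoc] at h
    exact add_right_cancel h
  have hzero : ∀ n : N, (x + y - x - y) * n * (x + y - x - y) = 0 := by
    intro n
    rw [LeftNearRing.mul_assoc, sub_mul, sub_mul, add_mul, add_comm_mul x y, add_sub_cancel_right,
      sub_self]
  exact sub_eq_iff_eq_add.mp (sub_eq_zero.mp ((hp _ _ hzero).elim id id))

end IsThreePrime

namespace IsMulDerivation

variable {d : N → N}

theorem add_mul (hd : IsMulDerivation d) (x y z : N) :
    (x * d y + d x * y) * z = x * d y * z + d x * y * z := by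
  have h : x * y * d z + (x * d y + d x * y) * z = x * y * d z + (x * d y * z + d x * y * z) :=
    calc x * y * d z + (x * d y + d x * y) * z = d (x * y * z) := by rw [hd, hd]
      _ = d (x * (y * z)) := by rw [LeftNearRing.mul_assoc]
      _ = x * y * d z + (x * d y * z + d x * y * z) := by
        rw [hd, hd, LeftNearRing.left_distrib, add_assoc, LeftNearRing.mul_assoc x y,
          LeftNearRing.mul_assoc x (d y), LeftNearRing.mul_assoc (d x)]
  exact add_left_cancel h

theorem mul_dd_mul (hd : IsMulDerivation d)
    (hc : ∀ x y : N, d x * y - y * d x = d x * d y - d y * d x) (x y : N) :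
    d x * (d (d x) * y) = d (d x) * y * d x := by
  have h := hc x (d x * y)
  have hxy : d x * (d x * y) - d x * (y * d x) = d x * (d x * d y) - d x * (d y * d x) := by
    rw [← LeftNearRing.mul_sub, ← LeftNearRing.mul_sub, hc]
  rw [hd, LeftNearRing.left_distrib, hd.add_mul, LeftNearRing.mul_assoc (d x) y,
    LeftNearRing.mul_assoc (d x) (d y), hxy] at h
  -- `h` now reads `A - C = A + B - (C + D)`, whence `B = D`
  replace h := sub_eq_iff_eq_add.mp h.symm
  rw [sub_eq_add_neg, add_assoc, neg_add_cancel_left] at h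
  exact add_left_cancel h

theorem dd_mul_mul_commutator (hd : IsMulDerivation d)
    (hc : ∀ x y : N, d x * y - y * d x = d x * d y - d y * d x) (x y n : N) :
    d (d x) * y * (n * d x - d x * n) = 0 := by
  have h₁ : d (d x) * y * n * d x = d x * (d (d x) * (y * n)) := by
    rw [mul_dd_mul hd hc x (y * n), LeftNearRing.mul_assoc (d (d x)) y n]
  have h₂ : d (d x) * y * d x * n = d x * (d (d x) * (y * n)) := by
    rw [← mul_dd_mul hd hc x y, LeftNearRing.mul_assoc (d x),
      LeftNearRing.mul_assoc (d (d x)) y n]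
  rw [LeftNearRing.mul_sub, ← LeftNearRing.mul_assoc _ n, ← LeftNearRing.mul_assoc _ (d x),
    h₁, h₂, sub_self]

theorem commute (hp : IsThreePrime N) (hzs : ∀ x : N, 0 * x = 0) (hd : IsMulDerivation d)
    (hc : ∀ x y : N, d x * y - y * d x = d x * d y - d y * d x) (x y : N) :
    d x * y = y * d x := by
  have hdd (z : N) : d (d z) = 0 ∨ ∀ n : N, d z * n = n * d z := by
    refine or_iff_not_imp_left.mpr fun hz n => ?_
    exact (sub_eq_zero.mp ((hp _ _ (dd_mul_mul_commutator hd hc z · n)).resolve_left hz)).symm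
  have hdxdy : d x * d y - d y * d x = 0 := by
    rcases hdd y with hy | hy
    · have h := hc x (d y)
      rwa [hy, LeftNearRing.mul_zero, hzs, sub_self] at h
    · rw [hy, sub_self]
  rw [← sub_eq_zero, hc, hdxdy]

theorem mul_mul_comm (hd : IsMulDerivation d) (hcomm : ∀ x y : N, d x * y = y * d x) (x y : N) :
    d y * (x * y) = d y * (y * x) := by
  have hdxy : d x * y * y = y * (d x * y) := by
    rw [LeftNearRing.mul_assoc, hcomm x (y * y), hcomm x y, LeftNearRing.mul_assoc]
  have h := hcomm (x * y) y
  rw [hd, hd.add_mul, LeftNearRing.left_distrib, hdxy] at h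
  calc d y * (x * y) = x * (d y * y) := by
        rw [hcomm y (x * y), LeftNearRing.mul_assoc, hcomm y y]
    _ = y * (x * d y) := by rw [← LeftNearRing.mul_assoc, add_right_cancel h]
    _ = d y * (y * x) := by
        rw [← hcomm y x, ← LeftNearRing.mul_assoc, ← hcomm y y, LeftNearRing.mul_assoc]

theorem mul_mul_comm_of_eq_zero (hzs : ∀ x : N, 0 * x = 0) (hd : IsMulDerivation d)
    (hcomm : ∀ x y : N, d x * y = y * d x) {y : N} (hy : d y = 0) (w X : N) :
    d w * (X * y) = d w * (y * X) := by
  have hyw : y * d w * X = X * (y * d w) := by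
    rw [← add_zero (y * d w), ← hzs w, ← hy, ← hd, hcomm]
  calc d w * (X * y) = X * (y * d w) := by rw [hcomm w, LeftNearRing.mul_assoc]
    _ = y * (X * d w) := by rw [← hyw, LeftNearRing.mul_assoc, hcomm w]
    _ = d w * (y * X) := by rw [← LeftNearRing.mul_assoc, hcomm w]

theorem mul_comm (hp : IsThreePrime N) (hzs : ∀ x : N, 0 * x = 0) (hd : IsMulDerivation d)
    (hd0 : ∃ x : N, d x ≠ 0) (hcomm : ∀ x y : N, d x * y = y * d x) (x y : N) :
    x * y = y * x := by
  by_cases hy : d y = 0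
  · obtain ⟨w, hw⟩ := hd0
    exact hp.commute_of_mul_mul_comm hw (mul_mul_comm_of_eq_zero hzs hd hcomm hy w) x
  · exact hp.commute_of_mul_mul_comm hy (mul_mul_comm hd hcomm · y) x

end IsMulDerivation

end LeftNearRing

theorem stmt9 {N : Type*} [LeftNearRing N]
    (hzs : ∀ x : N, 0 * x = 0)
    (hp : ∀ a b : N, (∀ n : N, a * n * b = 0) → a = 0 ∨ b = 0)
    (d : N → N) (hd : ∀ x y : N, d (x * y) = x * d y + d x * y)
    (hd0 : ∃ x : N, d x ≠ 0)
    (hc : ∀ x y : N, d x * y - y * d x = d x * d y - d y * d x) :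
    (∀ x y : N, x * y = y * x) ∧ (∀ x y : N, x + y = y + x) := by
  open LeftNearRing in
  have hmul : ∀ x y : N, x * y = y * x :=
    IsMulDerivation.mul_comm hp hzs hd hd0 (IsMulDerivation.commute hp hzs hd hc)
  exact ⟨hmul, IsThreePrime.add_comm_of_mul_comm hp hmul⟩
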